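/- arXiv:2412.06310 — 2 statements merged into one kernel-verified Lean document; each statement's English description precedes it below -/
import Mathlib

section
/- Let N be a positive natural number, Ĝ ∈ ℝᴺˣᴺ a constant symmetric positive semi-definite matrix, S : ℝᴺ → ℝ continuously differentiable, and Δt > 0. If a⁰, a¹ ∈ ℝᴺ satisfy the Average Vector Field step a¹ − a⁰ = Δt · ∫₀¹ Ĝ ∇S((1−ξ) a⁰ + ξ a¹) dξ, then S(a¹) ≥ S(a⁰). (The AVF scheme with constant dissipation matrix satisfies the discrete dissipative law.) -/
/-!
Along the segment `γ ξ = (1 - ξ) • a⁰ + ξ • a¹` the fundamental theorem of calculus gives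
`S a¹ - S a⁰ = ⟪I, a¹ - a⁰⟫` with `I = ∫₀¹ ∇S (γ ξ) dξ`. The AVF step says `a¹ - a⁰ = Δt • Ĝ I`,
so `S a¹ - S a⁰ = Δt ⟪I, Ĝ I⟫ ≥ 0`.
-/

open Matrix InnerProductSpace

section Gradient

variable {E : Type*} [NormedAddCommGroup E] [InnerProductSpace ℝ E] [CompleteSpace E]
  {S : E → ℝ}

theorem ContDiff.continuous_gradient (hS : ContDiff ℝ 1 S) : Continuous (gradient S) :=
  (toDual ℝ E).symm.continuous.comp (hS.continuous_fderiv one_ne_zero)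

theorem ContDiff.sub_eq_inner_integral_gradient_segment (hS : ContDiff ℝ 1 S) (a b : E) :
    S b - S a = ⟪∫ ξ in (0:ℝ)..1, gradient S ((1 - ξ) • a + ξ • b), b - a⟫_ℝ := by
  set γ : ℝ → E := fun ξ => (1 - ξ) • a + ξ • b
  have hγ : ∀ ξ, HasDerivAt γ (b - a) ξ := fun ξ => by
    have hγ_eq : γ = fun t => a + t • (b - a) := by
      funext t
      simp only [γ, sub_smul, one_smul, smul_sub]
      abel
    simpa [hγ_eq] using ((hasDerivAt_id ξ).smul_const (b - a)).const_add a
  have hSγ : ∀ ξ, HasDerivAt (S ∘ γ) ⟪gradient S (γ ξ), b - a⟫_ℝ ξ := fun ξ => by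
    simpa using (hS.differentiable one_ne_zero (γ ξ)).hasGradientAt.hasFDerivAt.comp_hasDerivAt
      ξ (hγ ξ)
  have hcont : Continuous (fun ξ => gradient S (γ ξ)) := hS.continuous_gradient.comp (by fun_prop)
  calc S b - S a = S (γ 1) - S (γ 0) := by simp [γ]
    _ = ∫ ξ in (0:ℝ)..1, ⟪gradient S (γ ξ), b - a⟫_ℝ :=
      (intervalIntegral.integral_eq_sub_of_hasDerivAt (fun ξ _ => hSγ ξ)
        ((hcont.inner continuous_const).intervalIntegrable 0 1)).symm
    _ = ⟪∫ ξ in (0:ℝ)..1, gradient S (γ ξ), b - a⟫_ℝ := by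
      simp_rw [real_inner_comm (b - a)]
      exact (innerSL ℝ (b - a)).intervalIntegral_comp_comm (hcont.intervalIntegrable 0 1)

theorem ContDiff.le_of_averageVectorField_step (hS : ContDiff ℝ 1 S) {G : E →L[ℝ] E}
    (hG : ∀ x, 0 ≤ ⟪x, G x⟫_ℝ) {Δt : ℝ} (hΔt : 0 ≤ Δt) {a b : E}
    (hstep : b - a = Δt • ∫ ξ in (0:ℝ)..1, G (gradient S ((1 - ξ) • a + ξ • b))) :
    S a ≤ S b := by
  set I := ∫ ξ in (0:ℝ)..1, gradient S ((1 - ξ) • a + ξ • b)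
  have hGI : b - a = Δt • G I := by
    rw [hstep, G.intervalIntegral_comp_comm]
    exact (hS.continuous_gradient.comp (by fun_prop)).intervalIntegrable 0 1
  have h := hS.sub_eq_inner_integral_gradient_segment a b
  rw [hGI, real_inner_smul_right] at h
  nlinarith [mul_nonneg hΔt (hG I)]

end Gradient

theorem Matrix.PosSemidef.inner_toEuclideanCLM_self_nonneg {n : Type*} [Fintype n]
    [DecidableEq n] {A : Matrix n n ℝ} (hA : A.PosSemidef) (x : EuclideanSpace ℝ n) :
    0 ≤ ⟪x, toEuclideanCLM (𝕜 := ℝ) A x⟫_ℝ := by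
  simpa [inner_toEuclideanCLM] using hA.dotProduct_mulVec_nonneg x.ofLp

theorem stmt_15_general (N : ℕ)
    (Gh : Matrix (Fin N) (Fin N) ℝ) (hGpsd : Gh.PosSemidef)
    (S : EuclideanSpace ℝ (Fin N) → ℝ) (hS : ContDiff ℝ 1 S)
    (Δt : ℝ) (hΔt : 0 < Δt) (a0 a1 : EuclideanSpace ℝ (Fin N))
    (hstep : a1 - a0 = Δt • ∫ ξ in (0:ℝ)..1,
      (WithLp.toLp 2 (Gh.mulVec (gradient S ((1 - ξ) • a0 + ξ • a1) : EuclideanSpace ℝ (Fin N))) :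
        EuclideanSpace ℝ (Fin N))) :
    S a0 ≤ S a1 :=
  hS.le_of_averageVectorField_step (G := toEuclideanCLM (𝕜 := ℝ) Gh)
    hGpsd.inner_toEuclideanCLM_self_nonneg hΔt.le hstep

/-- If `Ĝ` is a constant symmetric positive semi-definite matrix, `S` is
continuously differentiable, `Δt > 0`, and `a⁰, a¹` satisfy the Average Vector Field step
`a¹ − a⁰ = Δt ∫₀¹ Ĝ ∇S((1−ξ)a⁰ + ξa¹) dξ`, then `S(a¹) ≥ S(a⁰)`: the AVF scheme with constant
dissipation matrix satisfies the discrete dissipative law. -/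
theorem stmt_15 (N : ℕ) (hN : 0 < N)
    (Gh : Matrix (Fin N) (Fin N) ℝ) (hGpsd : Gh.PosSemidef)
    (S : EuclideanSpace ℝ (Fin N) → ℝ) (hS : ContDiff ℝ 1 S)
    (Δt : ℝ) (hΔt : 0 < Δt) (a0 a1 : EuclideanSpace ℝ (Fin N))
    (hstep : a1 - a0 = Δt • ∫ ξ in (0:ℝ)..1,
      (WithLp.toLp 2 (Gh.mulVec (gradient S ((1 - ξ) • a0 + ξ • a1) : EuclideanSpace ℝ (Fin N))) :
        EuclideanSpace ℝ (Fin N))) :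
    S a0 ≤ S a1 :=
  stmt_15_general N Gh hGpsd S hS Δt hΔt a0 a1 hstep
end

section
/- Let N be a positive natural number, Ĵ, Ĝ ∈ ℝᴺˣᴺ constant matrices with Ĵ skew-symmetric and Ĝ symmetric positive semi-definite, and H, S : ℝᴺ → ℝ continuously differentiable. Assume the mutual degeneracy conditions Ĝ ∇H(y) = 0 and Ĵ ∇S(y) = 0 for every y ∈ ℝᴺ. Let Δt > 0 and suppose a⁰, a¹ ∈ ℝᴺ satisfy the Average Vector Field step a¹ − a⁰ = Δt · ∫₀¹ (Ĵ ∇H + Ĝ ∇S)((1−ξ) a⁰ + ξ a¹) dξ. Then H(a¹) = H(a⁰) and S(a¹) ≥ S(a⁰). (The AVF scheme with constant matrices is a metriplectic time integrator.) -/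
/-!
The AVF average `∇̄F = ∫₀¹ ∇F((1 - ξ) a⁰ + ξ a¹) dξ` is a discrete gradient: the fundamental
theorem of calculus along the segment gives `F a¹ - F a⁰ = ⟪∇̄F, a¹ - a⁰⟫`. Constant matrices
commute with the average, so the step reads `a¹ - a⁰ = Δt (Ĵ ∇̄H + Ĝ ∇̄S)` and the degeneracy
conditions pass to `Ĝ ∇̄H = 0`, `Ĵ ∇̄S = 0`. Skew-symmetry of `Ĵ` and symmetry of `Ĝ` then leave
`H a¹ - H a⁰ = 0` and `S a¹ - S a⁰ = Δt ∇̄S ⬝ Ĝ ∇̄S ≥ 0`.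
-/

open Matrix InnerProductSpace
open scoped RealInnerProductSpace

namespace Matrix

variable {n : Type*} [Fintype n]

theorem dotProduct_mulVec_eq_zero_of_transpose_mulVec_eq_zero {A : Matrix n n ℝ} {x : n → ℝ}
    (hx : Aᵀ *ᵥ x = 0) (y : n → ℝ) : x ⬝ᵥ A *ᵥ y = 0 := by
  rw [dotProduct_mulVec, ← mulVec_transpose, hx, zero_dotProduct]

theorem dotProduct_mulVec_self_eq_zero_of_transpose_eq_neg {J : Matrix n n ℝ} (hJ : Jᵀ = -J)
    (x : n → ℝ) : x ⬝ᵥ J *ᵥ x = 0 := by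
  have h : x ⬝ᵥ J *ᵥ x = (Jᵀ *ᵥ x) ⬝ᵥ x := by rw [dotProduct_mulVec, mulVec_transpose]
  rw [hJ, neg_mulVec, neg_dotProduct, dotProduct_comm (J *ᵥ x)] at h
  linarith

variable {J G : Matrix n n ℝ} {u v : n → ℝ}

theorem dotProduct_skew_add_symm_eq_zero (hJ : Jᵀ = -J) (hG : G.IsSymm) (hGu : G *ᵥ u = 0)
    (v : n → ℝ) : u ⬝ᵥ (J *ᵥ u + G *ᵥ v) = 0 := by
  rw [dotProduct_add, dotProduct_mulVec_self_eq_zero_of_transpose_eq_neg hJ,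
    dotProduct_mulVec_eq_zero_of_transpose_mulVec_eq_zero (by rwa [hG.eq]), add_zero]

theorem dotProduct_skew_add_posSemidef_nonneg (hJ : Jᵀ = -J) (hG : G.PosSemidef)
    (hJv : J *ᵥ v = 0) (u : n → ℝ) : 0 ≤ v ⬝ᵥ (J *ᵥ u + G *ᵥ v) := by
  rw [dotProduct_add, dotProduct_mulVec_eq_zero_of_transpose_mulVec_eq_zero
    (by rw [hJ, neg_mulVec, hJv, neg_zero]), zero_add]
  simpa using hG.dotProduct_mulVec_nonneg v

theorem toEuclideanCLM_apply_eq_zero_iff [DecidableEq n] (A : Matrix n n ℝ)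
    (x : EuclideanSpace ℝ n) : toEuclideanCLM (𝕜 := ℝ) A x = 0 ↔ A *ᵥ x.ofLp = 0 := by
  rw [← ofLp_toEuclideanCLM]
  exact (WithLp.ofLp_eq_zero 2).symm

end Matrix

section

variable {E : Type*} [NormedAddCommGroup E] [InnerProductSpace ℝ E] [CompleteSpace E]

theorem ContDiff.continuous_gradient_s16 {f : E → ℝ} (hf : ContDiff ℝ 1 f) :
    Continuous (gradient f) :=
  (toDual ℝ E).symm.continuous.comp (hf.continuous_fderiv one_ne_zero)

noncomputable def avfGradient (f : E → ℝ) (a b : E) : E :=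
  ∫ ξ in (0 : ℝ)..1, gradient f ((1 - ξ) • a + ξ • b)

theorem continuous_gradient_segment {f : E → ℝ} (hf : ContDiff ℝ 1 f) (a b : E) :
    Continuous fun ξ : ℝ => gradient f ((1 - ξ) • a + ξ • b) :=
  hf.continuous_gradient_s16.comp (by fun_prop)

theorem sub_eq_inner_avfGradient {f : E → ℝ} (hf : ContDiff ℝ 1 f) (a b : E) :
    f b - f a = ⟪avfGradient f a b, b - a⟫ := by
  have hsegment (ξ : ℝ) : HasDerivAt (fun t : ℝ => (1 - t) • a + t • b) (b - a) ξ := by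
    rw [show (fun t : ℝ => (1 - t) • a + t • b) = AffineMap.lineMap a b from
      funext fun t => (AffineMap.lineMap_apply_module a b t).symm]
    exact AffineMap.hasDerivAt_lineMap
  have hderiv (ξ : ℝ) : HasDerivAt (fun t : ℝ => f ((1 - t) • a + t • b))
      (innerSL ℝ (b - a) (gradient f ((1 - ξ) • a + ξ • b))) ξ := by
    have := (hf.differentiable one_ne_zero _).hasGradientAt.hasFDerivAt.comp_hasDerivAt ξ
      (hsegment ξ)
    simpa only [Function.comp_def, toDual_apply_apply, innerSL_apply_apply,
      real_inner_comm (b - a)] using this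
  have hcont := continuous_gradient_segment hf a b
  rw [real_inner_comm, avfGradient, ← innerSL_apply_apply,
    ← (innerSL ℝ (b - a)).intervalIntegral_comp_comm (hcont.intervalIntegrable 0 1),
    intervalIntegral.integral_eq_sub_of_hasDerivAt (fun ξ _ => hderiv ξ)
      (((innerSL ℝ (b - a)).continuous.comp hcont).intervalIntegrable 0 1)]
  simp

variable {F : Type*} [NormedAddCommGroup F] [NormedSpace ℝ F] [CompleteSpace F]

theorem ContinuousLinearMap.map_avfGradient_eq_zero (L : E →L[ℝ] F) {f : E → ℝ}
    (hf : ContDiff ℝ 1 f) (hL : ∀ y, L (gradient f y) = 0) (a b : E) :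
    L (avfGradient f a b) = 0 := by
  rw [avfGradient, ← L.intervalIntegral_comp_comm
    ((continuous_gradient_segment hf a b).intervalIntegrable 0 1)]
  simp [hL]

theorem integral_map_gradient_add_map_gradient (L M : E →L[ℝ] F) {f g : E → ℝ}
    (hf : ContDiff ℝ 1 f) (hg : ContDiff ℝ 1 g) (a b : E) :
    ∫ ξ in (0 : ℝ)..1, (L (gradient f ((1 - ξ) • a + ξ • b)) +
      M (gradient g ((1 - ξ) • a + ξ • b))) = L (avfGradient f a b) + M (avfGradient g a b) := by
  have hf' := continuous_gradient_segment hf a b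
  have hg' := continuous_gradient_segment hg a b
  have hLf : Continuous fun ξ : ℝ => L (gradient f ((1 - ξ) • a + ξ • b)) :=
    L.continuous.comp hf'
  have hMg : Continuous fun ξ : ℝ => M (gradient g ((1 - ξ) • a + ξ • b)) :=
    M.continuous.comp hg'
  rw [intervalIntegral.integral_add (hLf.intervalIntegrable 0 1) (hMg.intervalIntegrable 0 1),
    L.intervalIntegral_comp_comm (hf'.intervalIntegrable 0 1),
    M.intervalIntegral_comp_comm (hg'.intervalIntegrable 0 1), avfGradient, avfGradient]

end

theorem stmt_16_general (N : ℕ)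
    (Jh Gh : Matrix (Fin N) (Fin N) ℝ) (hJskew : Jhᵀ = -Jh) (hGpsd : Gh.PosSemidef)
    (H S : EuclideanSpace ℝ (Fin N) → ℝ) (hH : ContDiff ℝ 1 H) (hS : ContDiff ℝ 1 S)
    (hdeg1 : ∀ y : EuclideanSpace ℝ (Fin N),
      Gh.mulVec (gradient H y : EuclideanSpace ℝ (Fin N)) = 0)
    (hdeg2 : ∀ y : EuclideanSpace ℝ (Fin N),
      Jh.mulVec (gradient S y : EuclideanSpace ℝ (Fin N)) = 0)
    (Δt : ℝ) (hΔt : 0 < Δt) (a0 a1 : EuclideanSpace ℝ (Fin N))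
    (hstep : a1 - a0 = Δt • ∫ ξ in (0:ℝ)..1,
      (WithLp.toLp 2 (Jh.mulVec (gradient H ((1 - ξ) • a0 + ξ • a1) : EuclideanSpace ℝ (Fin N)) +
        Gh.mulVec (gradient S ((1 - ξ) • a0 + ξ • a1) : EuclideanSpace ℝ (Fin N))) :
          EuclideanSpace ℝ (Fin N))) :
    H a1 = H a0 ∧ S a0 ≤ S a1 := by
  set gH := avfGradient H a0 a1
  set gS := avfGradient S a0 a1
  set J := toEuclideanCLM (𝕜 := ℝ) Jh
  set G := toEuclideanCLM (𝕜 := ℝ) Gh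
  have hGgH : Gh *ᵥ gH.ofLp = 0 := (toEuclideanCLM_apply_eq_zero_iff _ _).mp <|
    G.map_avfGradient_eq_zero hH (fun y => (toEuclideanCLM_apply_eq_zero_iff _ _).mpr (hdeg1 y)) _ _
  have hJgS : Jh *ᵥ gS.ofLp = 0 := (toEuclideanCLM_apply_eq_zero_iff _ _).mp <|
    J.map_avfGradient_eq_zero hS (fun y => (toEuclideanCLM_apply_eq_zero_iff _ _).mpr (hdeg2 y)) _ _
  have hstep' : a1 - a0 = Δt • (J gH + G gS) := by
    rw [hstep, ← integral_map_gradient_add_map_gradient J G hH hS]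
    rfl
  have hincrement {F : EuclideanSpace ℝ (Fin N) → ℝ} (hF : ContDiff ℝ 1 F) :
      F a1 - F a0 = Δt * ((avfGradient F a0 a1).ofLp ⬝ᵥ (Jh *ᵥ gH.ofLp + Gh *ᵥ gS.ofLp)) := by
    rw [sub_eq_inner_avfGradient hF, hstep', inner_smul_right, inner_add_right,
      inner_toEuclideanCLM, inner_toEuclideanCLM, dotProduct_add]
  have hH_const : gH.ofLp ⬝ᵥ (Jh *ᵥ gH.ofLp + Gh *ᵥ gS.ofLp) = 0 :=
    dotProduct_skew_add_symm_eq_zero hJskew (isHermitian_iff_isSymm.mp hGpsd.isHermitian) hGgH _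
  have hS_mono : 0 ≤ gS.ofLp ⬝ᵥ (Jh *ᵥ gH.ofLp + Gh *ᵥ gS.ofLp) :=
    dotProduct_skew_add_posSemidef_nonneg hJskew hGpsd hJgS _
  have hH' := hincrement hH
  have hS' := hincrement hS
  rw [hH_const, mul_zero] at hH'
  exact ⟨by linarith, by linarith [mul_nonneg hΔt.le hS_mono]⟩

/-- Let `Ĵ` be a constant skew-symmetric matrix and `Ĝ` a constant symmetric
positive semi-definite matrix, `H, S` continuously differentiable, satisfying the mutual
degeneracy conditions `Ĝ∇H(y) = 0` and `Ĵ∇S(y) = 0` for every `y`. If `Δt > 0` and `a⁰, a¹`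
satisfy the Average Vector Field step
`a¹ − a⁰ = Δt ∫₀¹ (Ĵ∇H + Ĝ∇S)((1−ξ)a⁰ + ξa¹) dξ`, then `H(a¹) = H(a⁰)` and `S(a¹) ≥ S(a⁰)`:
the AVF scheme with constant matrices is a metriplectic time integrator. -/
theorem stmt_16 (N : ℕ) (hN : 0 < N)
    (Jh Gh : Matrix (Fin N) (Fin N) ℝ) (hJskew : Jhᵀ = -Jh) (hGpsd : Gh.PosSemidef)
    (H S : EuclideanSpace ℝ (Fin N) → ℝ) (hH : ContDiff ℝ 1 H) (hS : ContDiff ℝ 1 S)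
    (hdeg1 : ∀ y : EuclideanSpace ℝ (Fin N),
      Gh.mulVec (gradient H y : EuclideanSpace ℝ (Fin N)) = 0)
    (hdeg2 : ∀ y : EuclideanSpace ℝ (Fin N),
      Jh.mulVec (gradient S y : EuclideanSpace ℝ (Fin N)) = 0)
    (Δt : ℝ) (hΔt : 0 < Δt) (a0 a1 : EuclideanSpace ℝ (Fin N))
    (hstep : a1 - a0 = Δt • ∫ ξ in (0:ℝ)..1,
      (WithLp.toLp 2 (Jh.mulVec (gradient H ((1 - ξ) • a0 + ξ • a1) : EuclideanSpace ℝ (Fin N)) +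
        Gh.mulVec (gradient S ((1 - ξ) • a0 + ξ • a1) : EuclideanSpace ℝ (Fin N))) :
          EuclideanSpace ℝ (Fin N))) :
    H a1 = H a0 ∧ S a0 ≤ S a1 :=
  stmt_16_general N Jh Gh hJskew hGpsd H S hH hS hdeg1 hdeg2 Δt hΔt a0 a1 hstep
end
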